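/- arXiv:math/9508201 — 3 statements merged into one kernel-verified Lean document; each statement's English description precedes it below -/
import Mathlib

section
/- Let a be a set of infinite regular cardinals with μ = sup(a) ∉ a, J an ideal on a containing all bounded subsets of a, λ > μ a regular cardinal, and ⟨g_α : α < λ⟩ a sequence of partial functions on a such that each dom(g_α) is cobounded in a with g_α(κ) ∈ κ, and such that for every f ∈ ∏a there is ζ < λ with ∀^J κ ∈ a, f(κ) < g_{μ·ζ}(κ). Let P = ∏_{κ∈a} ({<κ}2). Then for every p ∈ P there exist ζ < λ and q ∈ P such that q_κ extends p_κ for every κ ∈ a, and ∀^J κ ∈ a, dom(q_κ) = g_{μ·ζ}(κ). (In other words, the union of the sets P^{(μ·ζ)} = {p ∈ P : ∀^J κ, dom(p_κ) = g_{μ·ζ}(κ)} for ζ < λ is dense in P.) -/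
open Cardinal Set

/-- `f` is a member of `∏ a`: for every `κ ∈ a`, `f κ` is an ordinal less than `κ`. -/
def InProd (a : Set Cardinal) (f : Cardinal → Ordinal) : Prop :=
  ∀ κ ∈ a, f κ < κ.ord

/-- `J` is an ideal on the set `a`: a collection of subsets of `a` containing `∅`,
closed under subsets and finite unions, with `a ∉ J`. -/
def IsIdealOn (a : Set Cardinal) (J : Set (Set Cardinal)) : Prop :=
  (∀ b ∈ J, b ⊆ a) ∧ (∅ : Set Cardinal) ∈ J ∧
  (∀ b ∈ J, ∀ c ⊆ b, c ∈ J) ∧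
  (∀ b ∈ J, ∀ c ∈ J, b ∪ c ∈ J) ∧ a ∉ J

/-- `f <_J g` : the set of `κ ∈ a` where `f κ < g κ` fails belongs to `J`. -/
def ltJ (a : Set Cardinal) (J : Set (Set Cardinal)) (f g : Cardinal → Ordinal) : Prop :=
  {κ ∈ a | ¬ (f κ < g κ)} ∈ J

/-- `tcf (∏ a / J) = lam` : there is a `<_J`-increasing sequence of length `lam`
in `∏ a` which is cofinal in `(∏ a, <_J)`. -/
def IsTcf (a : Set Cardinal) (J : Set (Set Cardinal)) (lam : Cardinal) : Prop :=
  ∃ F : Ordinal → Cardinal → Ordinal,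
    (∀ α < lam.ord, InProd a (F α)) ∧
    (∀ α β, α < β → β < lam.ord → ltJ a J (F α) (F β)) ∧
    (∀ f, InProd a f → ∃ α < lam.ord, ltJ a J f (F α))

/-- A condition of `P = ∏_{κ ∈ a} ({<κ} 2)`: a family of binary sequences, where the
sequence at coordinate `κ` has length `ℓ κ < κ` (its values are given by a total
function `Ordinal → Fin 2`, only the values below `ℓ κ` being relevant). -/
def InP (a : Set Cardinal) (ℓ : Cardinal → Ordinal) : Prop :=
  ∀ κ ∈ a, ℓ κ < κ.ord

/-- The condition `(ℓq, q)` extends `(ℓp, p)` coordinatewise (sequence extension). -/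
def ExtendsP (a : Set Cardinal) (ℓp : Cardinal → Ordinal) (p : Cardinal → Ordinal → Fin 2)
    (ℓq : Cardinal → Ordinal) (q : Cardinal → Ordinal → Fin 2) : Prop :=
  ∀ κ ∈ a, ℓp κ ≤ ℓq κ ∧ ∀ i < ℓp κ, q κ i = p κ i

/-- The union over `ζ < lam` of the sets `P^{(μ·ζ)}` of conditions whose coordinatewise
domains agree mod `J` with `g_{μ·ζ}` is dense in `P`. -/
theorem stmt_4 (a : Set Cardinal) (μ lam : Cardinal) (J : Set (Set Cardinal))
    (ha : ∀ κ ∈ a, κ.IsRegular) (hsup : sSup a = μ) (hμa : μ ∉ a)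
    (hJ : IsIdealOn a J) (hJbd : ∀ b ⊆ a, sSup b < μ → b ∈ J)
    (hlam : lam.IsRegular) (hμlam : μ < lam)
    (D : Ordinal → Set Cardinal) (g : Ordinal → Cardinal → Ordinal)
    (hga : ∀ α < lam.ord, D α ⊆ a ∧ sSup (a \ D α) < μ ∧ ∀ κ ∈ D α, g α κ < κ.ord)
    (hcof : ∀ f, InProd a f → ∃ ζ < lam.ord,
      {κ ∈ a | ¬ (κ ∈ D (μ.ord * ζ) ∧ f κ < g (μ.ord * ζ) κ)} ∈ J) :
    ∀ (ℓp : Cardinal → Ordinal) (p : Cardinal → Ordinal → Fin 2), InP a ℓp →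
      ∃ ζ < lam.ord, ∃ (ℓq : Cardinal → Ordinal) (q : Cardinal → Ordinal → Fin 2),
        InP a ℓq ∧ ExtendsP a ℓp p ℓq q ∧
        {κ ∈ a | ¬ (κ ∈ D (μ.ord * ζ) ∧ ℓq κ = g (μ.ord * ζ) κ)} ∈ J := by
  classical
  intro ℓp p hp
  obtain ⟨ζ, hζ, hJset⟩ := hcof ℓp hp
  set α := μ.ord * ζ with hα
  have hαlt : α < lam.ord := by
    rw [Cardinal.lt_ord, Ordinal.card_mul, Cardinal.card_ord]
    exact Cardinal.mul_lt_of_lt hlam.aleph0_le hμlam (Cardinal.lt_ord.1 hζ)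
  obtain ⟨hD, _, hg⟩ := hga α hαlt
  refine ⟨ζ, hζ, fun κ => if κ ∈ D α ∧ ℓp κ < g α κ then g α κ else ℓp κ,
    fun κ i => if i < ℓp κ then p κ i else 0, ?_, ?_, ?_⟩
  · intro κ hκ
    by_cases h : κ ∈ D α ∧ ℓp κ < g α κ
    · simpa [h] using hg κ h.1
    · simpa [h] using hp κ hκ
  · intro κ hκ
    refine ⟨?_, ?_⟩
    · by_cases h : κ ∈ D α ∧ ℓp κ < g α κ
      · simpa [h] using le_of_lt h.2
      · simp [h]
    · intro i hi
      simp [hi]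
  · refine hJ.2.2.1 _ hJset _ ?_
    intro κ hκ
    simp only [mem_setOf_eq] at hκ ⊢
    refine ⟨hκ.1, fun hc => hκ.2 ⟨hc.1, ?_⟩⟩
    exact if_pos hc
end

section
/- Let a be a set of infinite regular cardinals with μ = sup(a) ∉ a, J an ideal on a containing all bounded subsets of a, λ > μ a regular cardinal, and ⟨g_α : α < λ⟩ a sequence of partial functions on a satisfying: (a) each dom(g_α) is cobounded in a with g_α(κ) ∈ κ; (b) if α < β < λ then ∀^J κ ∈ a, g_α(κ) < g_β(κ); (d) if α < β < α + μ then g_α(κ) < g_β(κ) for every κ ∈ dom(g_α) ∩ dom(g_β). Let α = μ·ζ with α + μ < λ, let p ∈ P satisfy ∀^J κ ∈ a, dom(p_κ) = g_α(κ), and let σ : μ → 2. Then there exists q ∈ P such that q_κ extends p_κ for every κ ∈ a, ∀^J κ ∈ a, dom(q_κ) = g_{α+μ}(κ), and for every j < μ: ∀^J κ ∈ a, κ ∈ dom(g_{α+j}), g_{α+j}(κ) ∈ dom(q_κ), and q_κ(g_{α+j}(κ)) = σ(j). -/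
open Cardinal Set

/-- Fact (extend) of the paper: a condition whose domains agree mod `J` with `g_α`
(`α = μ·ζ`) can be extended to one whose domains agree mod `J` with `g_{α+μ}` and which
writes `σ j` at position `g_{α+j} κ` for almost all `κ`, for each `j < μ`. -/
theorem stmt_5 (a : Set Cardinal) (μ lam : Cardinal) (J : Set (Set Cardinal))
    (ha : ∀ κ ∈ a, κ.IsRegular) (hsup : sSup a = μ) (hμa : μ ∉ a)
    (hJ : IsIdealOn a J) (hJbd : ∀ b ⊆ a, sSup b < μ → b ∈ J)
    (hlam : lam.IsRegular) (hμlam : μ < lam)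
    (D : Ordinal → Set Cardinal) (g : Ordinal → Cardinal → Ordinal)
    -- (a) each domain is a cobounded subset of `a`, and `g α κ ∈ κ` on the domain
    (hga : ∀ α < lam.ord, D α ⊆ a ∧ sSup (a \ D α) < μ ∧ ∀ κ ∈ D α, g α κ < κ.ord)
    -- (b) increasing mod `J`
    (hgb : ∀ α β, α < β → β < lam.ord →
      {κ ∈ a | ¬ (κ ∈ D α ∧ κ ∈ D β ∧ g α κ < g β κ)} ∈ J)
    -- (d) pointwise increasing within blocks of length `μ`
    (hgd : ∀ α β, α < β → β < α + μ.ord → β < lam.ord →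
      ∀ κ ∈ D α ∩ D β, g α κ < g β κ)
    (α ζ : Ordinal) (hα : α = μ.ord * ζ) (hαμ : α + μ.ord < lam.ord)
    (ℓp : Cardinal → Ordinal) (p : Cardinal → Ordinal → Fin 2) (hp : InP a ℓp)
    (hpdom : {κ ∈ a | ¬ (κ ∈ D α ∧ ℓp κ = g α κ)} ∈ J)
    (σ : Ordinal → Fin 2) :
    ∃ (ℓq : Cardinal → Ordinal) (q : Cardinal → Ordinal → Fin 2),
      InP a ℓq ∧ ExtendsP a ℓp p ℓq q ∧
      {κ ∈ a | ¬ (κ ∈ D (α + μ.ord) ∧ ℓq κ = g (α + μ.ord) κ)} ∈ J ∧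
      ∀ j < μ.ord,
        {κ ∈ a | ¬ (κ ∈ D (α + j) ∧ g (α + j) κ < ℓq κ ∧
          q κ (g (α + j) κ) = σ j)} ∈ J := by

  classical
  obtain ⟨hJa, hJ0, hJsub, hJun, hJtop⟩ := hJ
  -- degenerate case μ.ord = 0
  rcases eq_or_ne μ.ord 0 with hμ0 | hμ0
  · refine ⟨ℓp, p, hp, fun κ hκ => ⟨le_rfl, fun i _ => rfl⟩, ?_, ?_⟩
    · simpa [hμ0] using hpdom
    · intro j hj
      rw [hμ0] at hj
      exact absurd hj (not_lt.2 (zero_le (a := j)))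
  have hμpos : (0 : Ordinal) < μ.ord := pos_iff_ne_zero.2 hμ0
  set A := α + μ.ord with hAdef
  have hαlt : α < A := by
    have h := (add_lt_add_iff_left α).2 hμpos
    rwa [add_zero] at h
  have hgaA := hga A hαμ
  -- uniqueness of the index writing at a given position
  have key : ∀ j j', j < j' → j' < μ.ord → ∀ κ, κ ∈ D (α + j) → κ ∈ D (α + j') →
      g (α + j) κ < g (α + j') κ := by
    intro j j' hjj' hj' κ h1 h2
    have h3 : α + j' < α + j + μ.ord := by
      rw [add_assoc]
      exact (add_lt_add_iff_left α).2 (lt_of_lt_of_le hj' (le_add_self))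
    exact hgd (α + j) (α + j') ((add_lt_add_iff_left α).2 hjj') h3
      (lt_trans ((add_lt_add_iff_left α).2 hj') hαμ) κ ⟨h1, h2⟩
  have huniq : ∀ κ j j', j < μ.ord → j' < μ.ord → κ ∈ D (α + j) → κ ∈ D (α + j') →
      g (α + j) κ = g (α + j') κ → j = j' := by
    intro κ j j' hj hj' h1 h2 heq
    rcases lt_trichotomy j j' with h | h | h
    · exact absurd heq (ne_of_lt (key j j' h hj' κ h1 h2))
    · exact h
    · exact absurd heq.symm (ne_of_lt (key j' j h hj κ h2 h1))
  -- the new condition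
  set L : Cardinal → Ordinal := fun κ =>
    if κ ∈ D A ∧ ℓp κ ≤ g A κ ∧ g A κ < κ.ord then g A κ else ℓp κ with hLdef
  set q : Cardinal → Ordinal → Fin 2 := fun κ i =>
    if h : ∃ j, j < μ.ord ∧ κ ∈ D (α + j) ∧ g (α + j) κ = i ∧ ℓp κ ≤ i
    then σ h.choose else p κ i with hqdef
  have hB1 := hgb α A hαlt hαμ
  -- on the good set, L κ = g A κ
  have hLgood : ∀ κ, κ ∈ D α → ℓp κ = g α κ → κ ∈ D A → g α κ < g A κ → L κ = g A κ := by
    intro κ h1 h2 h3 h4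
    have : κ ∈ D A ∧ ℓp κ ≤ g A κ ∧ g A κ < κ.ord :=
      ⟨h3, by rw [h2]; exact le_of_lt h4, hgaA.2.2 κ h3⟩
    simp only [hLdef, if_pos this]
  refine ⟨L, q, ?_, ?_, ?_, ?_⟩
  · -- InP
    intro κ hκ
    by_cases h : κ ∈ D A ∧ ℓp κ ≤ g A κ ∧ g A κ < κ.ord
    · simp only [hLdef, if_pos h]; exact h.2.2
    · simp only [hLdef, if_neg h]; exact hp κ hκ
  · -- ExtendsP
    intro κ hκ
    constructor
    · by_cases h : κ ∈ D A ∧ ℓp κ ≤ g A κ ∧ g A κ < κ.ord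
      · simp only [hLdef, if_pos h]; exact h.2.1
      · simp only [hLdef, if_neg h]; exact le_rfl
    · intro i hi
      have hne : ¬ ∃ j, j < μ.ord ∧ κ ∈ D (α + j) ∧ g (α + j) κ = i ∧ ℓp κ ≤ i := by
        rintro ⟨j, -, -, -, hle⟩
        exact absurd hi (not_lt.2 hle)
      simp only [hqdef, dif_neg hne]
  · -- domains mod J
    refine hJsub _ (hJun _ hpdom _ hB1) _ ?_
    intro κ hκ
    simp only [Set.mem_setOf_eq] at hκ
    by_contra hnot
    have h0 : κ ∈ D α ∧ ℓp κ = g α κ := by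
      by_contra h; exact hnot (Set.mem_union_left _ ⟨hκ.1, h⟩)
    have h1 : κ ∈ D α ∧ κ ∈ D A ∧ g α κ < g A κ := by
      by_contra h; exact hnot (Set.mem_union_right _ ⟨hκ.1, h⟩)
    exact hκ.2 ⟨h1.2.1, by rw [hLgood κ h0.1 h0.2 h1.2.1 (h0.2 ▸ h1.2.2)]⟩
  · -- writing σ j mod J
    intro j hj
    have hBj := hgb (α + j) A ((add_lt_add_iff_left α).2 hj) hαμ
    refine hJsub _ (hJun _ (hJun _ hpdom _ hB1) _ hBj) _ ?_
    intro κ hκ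
    simp only [Set.mem_setOf_eq] at hκ
    by_contra hnot
    have h0 : κ ∈ D α ∧ ℓp κ = g α κ := by
      by_contra h
      exact hnot (Set.mem_union_left _ (Set.mem_union_left _ ⟨hκ.1, h⟩))
    have h1 : κ ∈ D α ∧ κ ∈ D A ∧ g α κ < g A κ := by
      by_contra h
      exact hnot (Set.mem_union_left _ (Set.mem_union_right _ ⟨hκ.1, h⟩))
    have h2 : κ ∈ D (α + j) ∧ κ ∈ D A ∧ g (α + j) κ < g A κ := by
      by_contra h; exact hnot (Set.mem_union_right _ ⟨hκ.1, h⟩)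
    -- h0 : κ ∈ D α ∧ ℓp κ = g α κ ; h1 : κ ∈ D α ∧ κ ∈ D A ∧ g α κ < g A κ
    -- h2 : κ ∈ D (α + j) ∧ κ ∈ D A ∧ g (α + j) κ < g A κ
    have hL : L κ = g A κ := hLgood κ h0.1 h0.2 h1.2.1 h1.2.2
    have hle : ℓp κ ≤ g (α + j) κ := by
      rcases eq_or_ne j 0 with rfl | hjne
      · rw [add_zero]; exact le_of_eq h0.2
      · have hpos : (0 : Ordinal) < j := pos_iff_ne_zero.2 hjne
        have := key 0 j hpos hj κ (by rw [add_zero]; exact h0.1) h2.1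
        rw [add_zero] at this
        exact le_of_lt (lt_of_le_of_lt (le_of_eq h0.2) this)
    have hex : ∃ j', j' < μ.ord ∧ κ ∈ D (α + j') ∧ g (α + j') κ = g (α + j) κ ∧
        ℓp κ ≤ g (α + j) κ := ⟨j, hj, h2.1, rfl, hle⟩
    have hqval : q κ (g (α + j) κ) = σ j := by
      simp only [hqdef, dif_pos hex]
      obtain ⟨hj', hD', heq', -⟩ := hex.choose_spec
      rw [huniq κ hex.choose j hj' hj hD' h2.1 heq']
    exact hκ.2 ⟨h2.1, hL ▸ h2.2.2, hqval⟩
end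

section
/- Let a be a set of infinite regular cardinals with μ = sup(a) ∉ a, J an ideal on a containing all bounded subsets of a, λ > μ a regular cardinal, and ⟨g_α : α < λ⟩ a sequence of partial functions on a satisfying: (a) each dom(g_α) is cobounded in a with g_α(κ) ∈ κ; (b) if α < β < λ then ∀^J κ ∈ a, g_α(κ) < g_β(κ); (c) for every f ∈ ∏a there is ζ < λ with ∀^J κ ∈ a, f(κ) < g_{μ·ζ}(κ); (d) if α < β < α + μ then g_α(κ) < g_β(κ) for all κ ∈ dom(g_α) ∩ dom(g_β). Let H : (μ → 2) → ({<λ}2) be a surjection. For a family η = (η_κ)_{κ∈a} of total functions η_κ : κ → 2, define h_η : λ → 2 by h_η(α) = 0 iff (∀^J κ ∈ a, κ ∈ dom(g_α) and η_κ(g_α(κ)) = 0), and h_η(α) = 1 otherwise; for ξ < λ let ρ_η^ξ : μ → 2 be given by ρ_η^ξ(i) = h_η(μ·ξ + i), and let ρ_η be the transfinite concatenation of the sequence ⟨H(ρ_η^ξ) : ξ < λ⟩ of binary sequences. Then for every p ∈ P and every dense subset D of ({<λ}2) (dense: every element of ({<λ}2) has an extension in D), there exist q ∈ P with q_κ extending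 p_κ for all κ ∈ a and s ∈ D such that for every family η = (η_κ)_{κ∈a} of total functions η_κ : κ → 2 with η_κ extending q_κ for all κ, s is an initial segment of ρ_η. -/
/-!
By (c) there is `ζ` with `p <_J g_{μ·ζ}`. For `σ : μ → 2` let `q_σ` extend `p`, up to
`g_{μ·ζ+μ}(κ)`, by writing `σ(i)` at position `g_{μ·ζ+i}(κ)` (`i < μ`) and `0` elsewhere; by (d)
these positions are distinct and at least `g_{μ·ζ}(κ)`. By (b), for `α < μ·ζ` almost every
`g_α(κ)` lies below `g_{μ·ζ}(κ)`, where every `η` extending `q_σ` agrees with `p` padded by zeros.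
So the first `ζ` blocks of `ρ_η`, and their total length (`< λ` as `λ` is regular), depend neither
on `σ` nor on `η`. Extend this initial segment to some `s ∈ D` and choose `σ` with `H(σ)` the rest
of `s`. Almost every `g_{μ·ζ+i}(κ)` lies in `[ℓ(p_κ), g_{μ·ζ+μ}(κ))`, so `ρ_η^ζ = σ` and the
`ζ`-th block of `ρ_η` completes `s`.
-/

open Cardinal Set

open Filter

universe u

theorem Ordinal.mul_add_lt_mul {a b c d : Ordinal} (hbc : b < c) (hd : d < a) :
    a * b + d < a * c :=
  ((add_lt_add_iff_left _).2 hd).trans_le <| by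
    rw [← mul_add_one]
    exact mul_le_mul_right (Order.add_one_le_of_lt hbc) a

namespace IsIdealOn

variable {a : Set Cardinal} {J : Set (Set Cardinal)}

def filter (hJ : IsIdealOn a J) : Filter Cardinal :=
  Filter.comk (fun t => a ∩ t ∈ J) (by simpa using hJ.2.1)
    (fun t ht s hst => hJ.2.2.1 _ ht _ (inter_subset_inter_right a hst))
    (fun s hs t ht => by rw [inter_union_distrib_left]; exact hJ.2.2.2.1 _ hs _ ht)

theorem eventually_filter_iff (hJ : IsIdealOn a J) {P : Cardinal → Prop} :
    (∀ᶠ κ in hJ.filter, P κ) ↔ {κ ∈ a | ¬ P κ} ∈ J :=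
  Iff.rfl

theorem eventually_mem (hJ : IsIdealOn a J) : ∀ᶠ κ in hJ.filter, κ ∈ a :=
  hJ.eventually_filter_iff.2 (by simpa using hJ.2.1)

theorem neBot_filter (hJ : IsIdealOn a J) : hJ.filter.NeBot :=
  ⟨fun h => hJ.2.2.2.2 (by simpa [filter] using empty_mem_iff_bot.2 h)⟩

end IsIdealOn

section LadderBit

variable {F : Filter Cardinal} {D : Ordinal → Set Cardinal} {g : Ordinal → Cardinal → Ordinal}
  {η η' : Cardinal → Ordinal → Fin 2} {α : Ordinal}

open Classical in
/-- The bit `h_η α`. -/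
noncomputable def ladderBit (F : Filter Cardinal) (D : Ordinal → Set Cardinal)
    (g : Ordinal → Cardinal → Ordinal) (η : Cardinal → Ordinal → Fin 2) (α : Ordinal) : Fin 2 :=
  if ∀ᶠ κ in F, κ ∈ D α ∧ η κ (g α κ) = 0 then 0 else 1

theorem eq_ladderBit {x : Fin 2} (h : x = 0 ↔ ∀ᶠ κ in F, κ ∈ D α ∧ η κ (g α κ) = 0) :
    x = ladderBit F D g η α := by
  unfold ladderBit
  split_ifs with h0
  · exact h.2 h0
  · exact Fin.eq_one_of_ne_zero x (mt h.1 h0)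

theorem ladderBit_eq_of_eventually [F.NeBot] {c : Fin 2}
    (h : ∀ᶠ κ in F, κ ∈ D α ∧ η κ (g α κ) = c) : ladderBit F D g η α = c := by
  unfold ladderBit
  split_ifs with h0
  · obtain ⟨κ, hc, h0⟩ := (h.and h0).exists
    exact h0.2.symm.trans hc.2
  · exact (Fin.eq_one_of_ne_zero c fun hc => h0 (hc ▸ h)).symm

theorem ladderBit_congr (h : ∀ᶠ κ in F, η κ (g α κ) = η' κ (g α κ)) :
    ladderBit F D g η α = ladderBit F D g η' α := by
  unfold ladderBit
  rw [eventually_congr (h.mono fun κ hκ => by rw [hκ])]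

end LadderBit

structure IsConcatOffset (len off : Ordinal.{u} → Ordinal.{u}) : Prop where
  zero : off 0 = 0
  add_one : ∀ ξ, off (ξ + 1) = off ξ + len ξ
  limit : ∀ ξ, Order.IsSuccLimit ξ → off ξ = sSup (off '' Iio ξ)

noncomputable def concatOffset (len : Ordinal.{u} → Ordinal.{u}) (ξ : Ordinal.{u}) : Ordinal.{u} :=
  Ordinal.limitRecOn ξ 0 (fun ρ o => o + len ρ) fun ρ _ ih => ⨆ x : Iio ρ, ih x.1 x.2

theorem isConcatOffset_concatOffset (len : Ordinal.{u} → Ordinal.{u}) :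
    IsConcatOffset len (concatOffset len) where
  zero := Ordinal.limitRecOn_zero _ _ _
  add_one ξ := Ordinal.limitRecOn_add_one _ _ _ _
  limit ξ hξ := by rw [sSup_image', concatOffset, Ordinal.limitRecOn_limit _ _ _ _ hξ]; rfl

namespace IsConcatOffset

variable {len len' off off' : Ordinal.{u} → Ordinal.{u}}

theorem eq_of_eqOn (h : IsConcatOffset len off) (h' : IsConcatOffset len' off') {ζ : Ordinal}
    (hlen : ∀ ξ < ζ, len ξ = len' ξ) : ∀ ξ ≤ ζ, off ξ = off' ξ := by
  intro ξ
  induction ξ using Ordinal.limitRecOn with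
  | zero => exact fun _ => h.zero.trans h'.zero.symm
  | add_one ξ ih =>
    intro hξ
    have hξζ := (Order.lt_add_one_iff.2 le_rfl).trans_le hξ
    rw [h.add_one, h'.add_one, ih hξζ.le, hlen ξ hξζ]
  | limit ξ hξ ih =>
    intro hξζ
    rw [h.limit ξ hξ, h'.limit ξ hξ]
    exact congrArg sSup (image_congr fun ρ hρ => ih ρ hρ (hρ.le.trans hξζ))

theorem exists_of_lt (h : IsConcatOffset len off) {ξ j : Ordinal} (hj : j < off ξ) :
    ∃ ξ' < ξ, ∃ d < len ξ', j = off ξ' + d := by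
  induction ξ using Ordinal.limitRecOn generalizing j with
  | zero => rw [h.zero] at hj; exact absurd hj not_lt_zero
  | add_one ξ ih =>
    rw [h.add_one] at hj
    rcases lt_or_ge j (off ξ) with hlt | hle
    · obtain ⟨ξ', hξ', rest⟩ := ih hlt
      exact ⟨ξ', hξ'.trans (Order.lt_add_one_iff.2 le_rfl), rest⟩
    · refine ⟨ξ, Order.lt_add_one_iff.2 le_rfl, j - off ξ, ?_,
        (Ordinal.add_sub_cancel_of_le hle).symm⟩
      rwa [← add_lt_add_iff_left (off ξ), Ordinal.add_sub_cancel_of_le hle]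
  | limit ξ hξ ih =>
    rw [h.limit ξ hξ, lt_csSup_iff' Ordinal.bddAbove_of_small] at hj
    obtain ⟨_, ⟨ρ, hρ, rfl⟩, hjρ⟩ := hj
    obtain ⟨ξ', hξ', rest⟩ := ih ρ hρ hjρ
    exact ⟨ξ', hξ'.trans hρ, rest⟩

theorem lt_ord (h : IsConcatOffset len off) {c : Cardinal} (hc : c.IsRegular)
    (hlen : ∀ ξ < c.ord, len ξ < c.ord) {ξ : Ordinal} (hξ : ξ < c.ord) : off ξ < c.ord := by
  induction ξ using Ordinal.limitRecOn with
  | zero => rw [h.zero]; exact (Cardinal.isSuccLimit_ord hc.aleph0_le).pos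
  | add_one ξ ih =>
    have hξ' := (Order.lt_add_one_iff.2 le_rfl).trans hξ
    rw [h.add_one]
    exact Ordinal.isPrincipal_add_ord hc.aleph0_le (ih hξ') (hlen ξ hξ')
  | limit ξ hξl ih =>
    rw [h.limit ξ hξl, sSup_image']
    refine Ordinal.lift_iSup_lt_of_lt_cof ?_ fun ρ => ih ρ ρ.2 (ρ.2.trans hξ)
    rwa [← Ordinal.lift_cof, hc.cof_ord, Cardinal.mk_Iio_ordinal, Cardinal.lift_lift,
      Cardinal.lift_lt, ← Cardinal.lt_ord]

theorem exists_mem_dense_prefix {β : Type*} (h : IsConcatOffset len off)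
    (val : Ordinal → Ordinal → β) {S : Set (Ordinal × (Ordinal → β))} {c : Ordinal}
    (hS : ∀ l < c, ∀ t : Ordinal → β, ∃ s ∈ S, l ≤ s.1 ∧ ∀ i < l, s.2 i = t i)
    {ζ : Ordinal} (hζ : off ζ < c) :
    ∃ s ∈ S, off ζ ≤ s.1 ∧
      ∀ j < off ζ, ∃ ξ < ζ, ∃ d < len ξ, j = off ξ + d ∧ s.2 j = val ξ d := by
  choose! ξf hξf df hdf hj using fun j (hj : j < off ζ) => h.exists_of_lt hj
  obtain ⟨s, hs, hsl, hst⟩ := hS (off ζ) hζ fun j => val (ξf j) (df j)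
  exact ⟨s, hs, hsl, fun j hjζ => ⟨ξf j, hξf j hjζ, df j, hdf j hjζ, hj j hjζ, hst j hjζ⟩⟩

theorem exists_block_of_eqOn {ι β : Type*} {Hlen : ι → Ordinal.{u}}
    {Hfn : ι → Ordinal.{u} → β} {B B₀ : Ordinal.{u} → ι}
    (h : IsConcatOffset (fun ξ => Hlen (B ξ)) off)
    (h₀ : IsConcatOffset (fun ξ => Hlen (B₀ ξ)) off') {ζ : Ordinal} (hB : ∀ ξ < ζ, B ξ = B₀ ξ)
    {s : Ordinal × (Ordinal → β)}
    (hpre : ∀ j < off' ζ, ∃ ξ < ζ, ∃ d < Hlen (B₀ ξ), j = off' ξ + d ∧ s.2 j = Hfn (B₀ ξ) d)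
    (hs : off' ζ ≤ s.1) (hlen : Hlen (B ζ) = s.1 - off' ζ)
    (hval : ∀ d < s.1 - off' ζ, Hfn (B ζ) d = s.2 (off' ζ + d)) :
    ∀ i < s.1, ∃ ξ ≤ ζ, ∃ d < Hlen (B ξ), i = off ξ + d ∧ s.2 i = Hfn (B ξ) d := by
  have hoff := h.eq_of_eqOn h₀ fun ξ hξ => by rw [hB ξ hξ]
  intro i hi
  rcases lt_or_ge i (off' ζ) with hiζ | hiζ
  · obtain ⟨ξ, hξ, d, hd, rfl, hsd⟩ := hpre i hiζ
    exact ⟨ξ, hξ.le, d, hB ξ hξ ▸ hd, by rw [hoff ξ hξ.le], hB ξ hξ ▸ hsd⟩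
  · have hid : off' ζ + (i - off' ζ) = i := Ordinal.add_sub_cancel_of_le hiζ
    have hd : i - off' ζ < s.1 - off' ζ := by
      rwa [← add_lt_add_iff_left (off' ζ), hid, Ordinal.add_sub_cancel_of_le hs]
    exact ⟨ζ, le_rfl, _, hlen ▸ hd, by rw [hoff ζ le_rfl, hid], by rw [hval _ hd, hid]⟩

end IsConcatOffset

section Coding

variable {a : Set Cardinal.{u}} {F : Filter Cardinal.{u}} {D : Ordinal.{u} → Set Cardinal.{u}}
  {g : Ordinal.{u} → Cardinal.{u} → Ordinal.{u}} {M m : Ordinal.{u}} {κ : Cardinal.{u}}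

open Classical in
noncomputable def blockCode (D : Ordinal.{u} → Set Cardinal.{u})
    (g : Ordinal.{u} → Cardinal.{u} → Ordinal.{u}) (M : Ordinal.{u}) {m : Ordinal.{u}}
    (σ : {i : Ordinal // i < m} → Fin 2) (κ : Cardinal.{u}) (x : Ordinal.{u}) : Fin 2 :=
  if h : ∃ i : {i : Ordinal // i < m}, κ ∈ D (M + i.1) ∧ g (M + i.1) κ = x then σ h.choose
  else 0

def IsIncreasingOnBlock (D : Ordinal.{u} → Set Cardinal.{u})
    (g : Ordinal.{u} → Cardinal.{u} → Ordinal.{u}) (M m : Ordinal.{u}) : Prop :=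
  ∀ i j, i < j → j < m → ∀ κ ∈ D (M + i) ∩ D (M + j), g (M + i) κ < g (M + j) κ

theorem isIncreasingOnBlock_of_lt_add {c : Ordinal.{u}}
    (hg : ∀ α β, α < β → β < α + m → β < c → ∀ κ ∈ D α ∩ D β, g α κ < g β κ) (hM : M + m < c) :
    IsIncreasingOnBlock D g M m := fun i j hij hj =>
  hg _ _ ((add_lt_add_iff_left M).2 hij)
    (by rw [add_assoc]; exact (add_lt_add_iff_left M).2 (hj.trans_le le_add_self))
    (((add_lt_add_iff_left M).2 hj).trans hM)

theorem IsIncreasingOnBlock.apply_le (hinc : IsIncreasingOnBlock D g M m) {j : Ordinal}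
    (hj : j < m) (h₀ : κ ∈ D M) (hj' : κ ∈ D (M + j)) : g M κ ≤ g (M + j) κ := by
  rcases eq_zero_or_pos j with rfl | hpos
  · rw [add_zero]
  · simpa using (hinc 0 j hpos hj κ ⟨by simpa using h₀, hj'⟩).le

theorem blockCode_apply (hinc : IsIncreasingOnBlock D g M m) (σ : {i : Ordinal // i < m} → Fin 2)
    (i : {i : Ordinal // i < m}) (hκ : κ ∈ D (M + i.1)) :
    blockCode D g M σ κ (g (M + i.1) κ) = σ i := by
  have hex : ∃ i' : {i : Ordinal // i < m}, κ ∈ D (M + i'.1) ∧ g (M + i'.1) κ = g (M + i.1) κ :=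
    ⟨i, hκ, rfl⟩
  rw [blockCode, dif_pos hex]
  obtain ⟨hD, heq⟩ := hex.choose_spec
  congr 1
  rcases lt_trichotomy hex.choose i with hlt | heq' | hgt
  · exact absurd heq (hinc _ _ hlt i.2 κ ⟨hD, hκ⟩).ne
  · exact heq'
  · exact absurd heq (hinc _ _ hgt hex.choose.2 κ ⟨hκ, hD⟩).ne'

theorem blockCode_eq_zero_of_lt (hinc : IsIncreasingOnBlock D g M m)
    (σ : {i : Ordinal // i < m} → Fin 2) {x : Ordinal} (h₀ : κ ∈ D M) (hx : x < g M κ) :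
    blockCode D g M σ κ x = 0 := by
  refine dif_neg ?_
  rintro ⟨i, hi, rfl⟩
  exact (hinc.apply_le i.2 h₀ hi).not_gt hx

theorem exists_extension_coding [F.NeBot] (hinc : IsIncreasingOnBlock D g M m)
    (ha : ∀ᶠ κ in F, κ ∈ a) (hm : 0 < m)
    (hgb : ∀ α β, α < β → β ≤ M + m → ∀ᶠ κ in F, κ ∈ D α ∧ κ ∈ D β ∧ g α κ < g β κ)
    (hgm : ∀ κ ∈ D (M + m), g (M + m) κ < κ.ord) {ℓp : Cardinal → Ordinal}
    {p : Cardinal → Ordinal → Fin 2} (hp : InP a ℓp) (hℓp : ∀ᶠ κ in F, κ ∈ D M ∧ ℓp κ < g M κ)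
    (σ : {i : Ordinal // i < m} → Fin 2) :
    ∃ ℓq q, InP a ℓq ∧ ExtendsP a ℓp p ℓq q ∧
      ∀ η : Cardinal → Ordinal → Fin 2, (∀ κ ∈ a, ∀ x < ℓq κ, η κ x = q κ x) →
        (∀ α < M, ladderBit F D g η α =
          ladderBit F D g (fun κ x => if x < ℓp κ then p κ x else 0) α) ∧
        ∀ j, ladderBit F D g η (M + j.1) = σ j := by
  classical
  refine ⟨fun κ => if κ ∈ D (M + m) then max (ℓp κ) (g (M + m) κ) else ℓp κ,
    fun κ x => if x < ℓp κ then p κ x else blockCode D g M σ κ x, ?_, ?_, ?_⟩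
  · intro κ hκ
    dsimp only
    split_ifs with hD
    exacts [max_lt (hp κ hκ) (hgm κ hD), hp κ hκ]
  · refine fun κ _ => ⟨?_, fun x hx => if_pos hx⟩
    dsimp only
    split_ifs
    exacts [le_max_left _ _, le_rfl]
  intro η hη
  have hηq : ∀ κ ∈ a, κ ∈ D (M + m) → ∀ x < g (M + m) κ,
      η κ x = if x < ℓp κ then p κ x else blockCode D g M σ κ x := fun κ hκ hD x hx =>
    hη κ hκ x (by simpa only [if_pos hD] using hx.trans_le (le_max_right _ _))
  refine ⟨fun α hα => ladderBit_congr ?_, fun j => ladderBit_eq_of_eventually ?_⟩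
  · filter_upwards [ha, hgb α M hα le_self_add, hgb M (M + m) (lt_add_of_pos_right M hm) le_rfl]
      with κ hκ ⟨_, hDM, hαM⟩ ⟨_, hDm, hMm⟩
    rw [hηq κ hκ hDm _ (hαM.trans hMm)]
    split_ifs
    · rfl
    · exact blockCode_eq_zero_of_lt hinc σ hDM hαM
  · filter_upwards [ha, hℓp, hgb (M + j.1) (M + m) ((add_lt_add_iff_left M).2 j.2) le_rfl]
      with κ hκ ⟨hDM, hℓM⟩ ⟨hDj, hDm, hjm⟩
    refine ⟨hDj, ?_⟩
    rw [hηq κ hκ hDm _ hjm,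
      if_neg (hℓM.trans_le (hinc.apply_le j.2 hDM hDj)).not_gt]
    exact blockCode_apply hinc σ j hDj

end Coding

theorem stmt_7_general (a : Set Cardinal) (μ lam : Cardinal) (J : Set (Set Cardinal))
    (hJ : IsIdealOn a J)
    (hlam : lam.IsRegular) (hμlam : μ < lam)
    (D : Ordinal → Set Cardinal) (g : Ordinal → Cardinal → Ordinal)
    -- (a) each domain is a cobounded subset of `a`, and `g α κ ∈ κ` on the domain
    (hga : ∀ α < lam.ord, D α ⊆ a ∧ sSup (a \ D α) < μ ∧ ∀ κ ∈ D α, g α κ < κ.ord)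
    -- (b) increasing mod `J`
    (hgb : ∀ α β, α < β → β < lam.ord →
      {κ ∈ a | ¬ (κ ∈ D α ∧ κ ∈ D β ∧ g α κ < g β κ)} ∈ J)
    -- (c) cofinal, with witnesses divisible by `μ`
    (hgc : ∀ f, InProd a f → ∃ ζ : Ordinal, μ.ord * ζ < lam.ord ∧
      {κ ∈ a | ¬ (κ ∈ D (μ.ord * ζ) ∧ f κ < g (μ.ord * ζ) κ)} ∈ J)
    -- (d) pointwise increasing within blocks of length `μ`
    (hgd : ∀ α β, α < β → β < α + μ.ord → β < lam.ord →
      ∀ κ ∈ D α ∩ D β, g α κ < g β κ)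
    -- `H : (μ → 2) → ({<lam} 2)`, given by its length and value components
    (Hlen : ({i : Ordinal // i < μ.ord} → Fin 2) → Ordinal)
    (Hfn : ({i : Ordinal // i < μ.ord} → Fin 2) → Ordinal → Fin 2)
    (hHlt : ∀ σ, Hlen σ < lam.ord)
    -- `H` is onto `({<lam} 2)`
    (hHsurj : ∀ l < lam.ord, ∀ t : Ordinal → Fin 2,
      ∃ σ, Hlen σ = l ∧ ∀ i < l, Hfn σ i = t i)
    -- `Dset` is a dense subset of `({<lam} 2)`
    (Dset : Set (Ordinal × (Ordinal → Fin 2)))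
    (hDsub : ∀ s ∈ Dset, s.1 < lam.ord)
    (hDdense : ∀ l < lam.ord, ∀ t : Ordinal → Fin 2,
      ∃ s ∈ Dset, l ≤ s.1 ∧ ∀ i < l, s.2 i = t i)
    -- `p` is a condition in `P`
    (ℓp : Cardinal → Ordinal) (p : Cardinal → Ordinal → Fin 2) (hp : InP a ℓp) :
    ∃ (ℓq : Cardinal → Ordinal) (q : Cardinal → Ordinal → Fin 2),
      InP a ℓq ∧ ExtendsP a ℓp p ℓq q ∧
      ∃ s ∈ Dset,
        -- for every family `η` of total functions extending `q` ...
        ∀ η : Cardinal → Ordinal → Fin 2, (∀ κ ∈ a, ∀ i < ℓq κ, η κ i = q κ i) →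
        -- ... and `hEta` the function `h_η : lam → 2` determined by `η` ...
        ∀ hEta : Ordinal → Fin 2,
          (∀ α : Ordinal,
            (hEta α = 0 ↔ {κ ∈ a | ¬ (κ ∈ D α ∧ η κ (g α κ) = 0)} ∈ J)) →
        -- ... and `off` the offset function of the concatenation of the blocks
        -- `H (ρ_η^ξ)`, `ξ < lam`, where `ρ_η^ξ (i) = h_η (μ·ξ + i)` ...
        ∀ off : Ordinal → Ordinal,
          off 0 = 0 →
          (∀ ξ : Ordinal,
            off (ξ + 1) = off ξ + Hlen (fun i => hEta (μ.ord * ξ + i.1))) →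
          (∀ ξ : Ordinal, Order.IsSuccLimit ξ → off ξ = sSup (off '' Set.Iio ξ)) →
        -- ... `s` is an initial segment of the concatenation `ρ_η`.
        ∀ i < s.1, ∃ ξ < lam.ord,
          ∃ d < Hlen (fun j => hEta (μ.ord * ξ + j.1)),
            i = off ξ + d ∧ s.2 i = Hfn (fun j => hEta (μ.ord * ξ + j.1)) d := by
  have := hJ.neBot_filter
  have hμ : 0 < μ.ord := Cardinal.ord_pos.2
    (pos_of_gt (hga 0 (Cardinal.isSuccLimit_ord hlam.aleph0_le).pos).2.1)
  obtain ⟨ζ, hζ, hℓp⟩ := hgc ℓp hp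
  set M := μ.ord * ζ
  have hζlam : ζ < lam.ord := (Ordinal.le_mul_right ζ hμ).trans_lt hζ
  have hMm : M + μ.ord < lam.ord :=
    Ordinal.isPrincipal_add_ord hlam.aleph0_le hζ (Cardinal.ord_lt_ord.2 hμlam)
  have hinc := isIncreasingOnBlock_of_lt_add hgd hMm
  set blk : (Ordinal → Fin 2) → Ordinal → {i : Ordinal // i < μ.ord} → Fin 2 :=
    fun h ξ j => h (μ.ord * ξ + j.1)
  set h₀ := ladderBit hJ.filter D g fun κ x => if x < ℓp κ then p κ x else 0
  have hO := isConcatOffset_concatOffset fun ξ => Hlen (blk h₀ ξ)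
  obtain ⟨s, hsD, hsO, hpre⟩ := hO.exists_mem_dense_prefix (fun ξ => Hfn (blk h₀ ξ)) hDdense
    (hO.lt_ord hlam (fun ξ _ => hHlt _) hζlam)
  obtain ⟨σ, hσlen, hσ⟩ := hHsurj _ ((Ordinal.sub_le_self _ _).trans_lt (hDsub s hsD))
    fun d => s.2 (concatOffset (fun ξ => Hlen (blk h₀ ξ)) ζ + d)
  obtain ⟨ℓq, q, hq, hpq, hcoding⟩ := exists_extension_coding hinc hJ.eventually_mem hμ
    (fun α β h hβ => hgb α β h (hβ.trans_lt hMm)) (hga _ hMm).2.2 hp hℓp σ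
  refine ⟨ℓq, q, hq, hpq, s, hsD, fun η hη hEta hhEta off hoff0 hoffS hoffL i hi => ?_⟩
  obtain rfl : hEta = ladderBit hJ.filter D g η := funext fun α => eq_ladderBit (hhEta α)
  obtain ⟨hbelow, hcode⟩ := hcoding η hη
  have hζblk : blk (ladderBit hJ.filter D g η) ζ = σ := funext hcode
  obtain ⟨ξ, hξ, hblock⟩ := IsConcatOffset.exists_block_of_eqOn
    (B := blk (ladderBit hJ.filter D g η)) ⟨hoff0, hoffS, hoffL⟩ hO
    (fun ξ hξ => funext fun j => hbelow _ (Ordinal.mul_add_lt_mul hξ j.2)) hpre hsO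
    (hζblk ▸ hσlen) (hζblk ▸ hσ) i hi
  exact ⟨ξ, hξ.trans_lt hζlam, hblock⟩

/-- Main claim of the paper (density form): for every condition `p ∈ P` and every dense
subset `Dset` of `({<lam} 2)` there are an extension `q` of `p` and an `s ∈ Dset` such
that for every family `η` of total functions extending `q`, the sequence `s` is an
initial segment of `ρ_η`, the transfinite concatenation of `⟨H (ρ_η^ξ) : ξ < lam⟩`,
where `ρ_η^ξ (i) = h_η (μ·ξ + i)` and `h_η α = 0` iff almost all `κ` satisfy
`κ ∈ dom g_α ∧ η_κ (g_α κ) = 0`.  (Binary sequences of length `< lam` are represented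
as pairs `(len, values)`; `H` is represented by its length and value components
`Hlen`, `Hfn`; the concatenation is represented via its offset function `off`.) -/
theorem stmt_7 (a : Set Cardinal) (μ lam : Cardinal) (J : Set (Set Cardinal))
    (ha : ∀ κ ∈ a, κ.IsRegular) (hsup : sSup a = μ) (hμa : μ ∉ a)
    (hJ : IsIdealOn a J) (hJbd : ∀ b ⊆ a, sSup b < μ → b ∈ J)
    (hlam : lam.IsRegular) (hμlam : μ < lam)
    (D : Ordinal → Set Cardinal) (g : Ordinal → Cardinal → Ordinal)
    -- (a) each domain is a cobounded subset of `a`, and `g α κ ∈ κ` on the domain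
    (hga : ∀ α < lam.ord, D α ⊆ a ∧ sSup (a \ D α) < μ ∧ ∀ κ ∈ D α, g α κ < κ.ord)
    -- (b) increasing mod `J`
    (hgb : ∀ α β, α < β → β < lam.ord →
      {κ ∈ a | ¬ (κ ∈ D α ∧ κ ∈ D β ∧ g α κ < g β κ)} ∈ J)
    -- (c) cofinal, with witnesses divisible by `μ`
    (hgc : ∀ f, InProd a f → ∃ ζ : Ordinal, μ.ord * ζ < lam.ord ∧
      {κ ∈ a | ¬ (κ ∈ D (μ.ord * ζ) ∧ f κ < g (μ.ord * ζ) κ)} ∈ J)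
    -- (d) pointwise increasing within blocks of length `μ`
    (hgd : ∀ α β, α < β → β < α + μ.ord → β < lam.ord →
      ∀ κ ∈ D α ∩ D β, g α κ < g β κ)
    -- `H : (μ → 2) → ({<lam} 2)`, given by its length and value components
    (Hlen : ({i : Ordinal // i < μ.ord} → Fin 2) → Ordinal)
    (Hfn : ({i : Ordinal // i < μ.ord} → Fin 2) → Ordinal → Fin 2)
    (hHlt : ∀ σ, Hlen σ < lam.ord)
    -- `H` is onto `({<lam} 2)`
    (hHsurj : ∀ l < lam.ord, ∀ t : Ordinal → Fin 2,
      ∃ σ, Hlen σ = l ∧ ∀ i < l, Hfn σ i = t i)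
    -- `Dset` is a dense subset of `({<lam} 2)`
    (Dset : Set (Ordinal × (Ordinal → Fin 2)))
    (hDsub : ∀ s ∈ Dset, s.1 < lam.ord)
    (hDdense : ∀ l < lam.ord, ∀ t : Ordinal → Fin 2,
      ∃ s ∈ Dset, l ≤ s.1 ∧ ∀ i < l, s.2 i = t i)
    -- `p` is a condition in `P`
    (ℓp : Cardinal → Ordinal) (p : Cardinal → Ordinal → Fin 2) (hp : InP a ℓp) :
    ∃ (ℓq : Cardinal → Ordinal) (q : Cardinal → Ordinal → Fin 2),
      InP a ℓq ∧ ExtendsP a ℓp p ℓq q ∧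
      ∃ s ∈ Dset,
        -- for every family `η` of total functions extending `q` ...
        ∀ η : Cardinal → Ordinal → Fin 2, (∀ κ ∈ a, ∀ i < ℓq κ, η κ i = q κ i) →
        -- ... and `hEta` the function `h_η : lam → 2` determined by `η` ...
        ∀ hEta : Ordinal → Fin 2,
          (∀ α : Ordinal,
            (hEta α = 0 ↔ {κ ∈ a | ¬ (κ ∈ D α ∧ η κ (g α κ) = 0)} ∈ J)) →
        -- ... and `off` the offset function of the concatenation of the blocks
        -- `H (ρ_η^ξ)`, `ξ < lam`, where `ρ_η^ξ (i) = h_η (μ·ξ + i)` ...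
        ∀ off : Ordinal → Ordinal,
          off 0 = 0 →
          (∀ ξ : Ordinal,
            off (ξ + 1) = off ξ + Hlen (fun i => hEta (μ.ord * ξ + i.1))) →
          (∀ ξ : Ordinal, Order.IsSuccLimit ξ → off ξ = sSup (off '' Set.Iio ξ)) →
        -- ... `s` is an initial segment of the concatenation `ρ_η`.
        ∀ i < s.1, ∃ ξ < lam.ord,
          ∃ d < Hlen (fun j => hEta (μ.ord * ξ + j.1)),
            i = off ξ + d ∧ s.2 i = Hfn (fun j => hEta (μ.ord * ξ + j.1)) d :=
  stmt_7_general a μ lam J hJ hlam hμlam D g hga hgb hgc hgd Hlen Hfn hHlt hHsurj Dset hDsub hDdense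
    ℓp p hp
end
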